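/- arXiv:2604.09354 — 2 statements merged into one kernel-verified Lean document; each statement's English description precedes it below -/
import Mathlib

section
/- Let (X, x₀) be a pointed type and let δ : X → X ∨ X be a function such that π₁ ∘ δ = id and π₂ ∘ δ = id, where π₁, π₂ : X ∨ X → X are the two collapse maps. Then X is trivial: x = x₀ for every x ∈ X. -/
/-- The wedge sum `X ∨ X` of a pointed type `(X, x₀)` with itself: the quotient of the
sum type `X ⊕ X` by the relation identifying `inl x₀` with `inr x₀`. -/
def SelfWedge (X : Type*) (x₀ : X) : Type _ :=
  Quot (fun a b : X ⊕ X => a = Sum.inl x₀ ∧ b = Sum.inr x₀)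

/-- The first collapse map `π₁ : X ∨ X → X`, sending the class of `inl x` to `x` and the
class of `inr x` to `x₀`. -/
def selfWedgeFst {X : Type*} (x₀ : X) : SelfWedge X x₀ → X :=
  Quot.lift (Sum.elim id (fun _ => x₀)) (by rintro a b ⟨rfl, rfl⟩; rfl)

/-- The second collapse map `π₂ : X ∨ X → X`, sending the class of `inl x` to `x₀` and
the class of `inr x` to `x`. -/
def selfWedgeSnd {X : Type*} (x₀ : X) : SelfWedge X x₀ → X :=
  Quot.lift (Sum.elim (fun _ => x₀) id) (by rintro a b ⟨rfl, rfl⟩; rfl)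

/-- If a pointed type `(X, x₀)` admits a map `δ : X → X ∨ X` with `π₁ ∘ δ = id` and
`π₂ ∘ δ = id`, then `X` is trivial: `x = x₀` for every `x : X`. -/
theorem eq_basepoint_of_diagonal {X : Type*} (x₀ : X) (δ : X → SelfWedge X x₀)
    (h₁ : ∀ x, selfWedgeFst x₀ (δ x) = x) (h₂ : ∀ x, selfWedgeSnd x₀ (δ x) = x) :
    ∀ x : X, x = x₀ := by
  intro x
  obtain ⟨a, ha⟩ := Quot.exists_rep (δ x)
  have e1 := h₁ x
  have e2 := h₂ x
  rw [← ha] at e1 e2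
  cases a with
  | inl y => simpa [selfWedgeFst, selfWedgeSnd, e1] using e2.symm
  | inr y => simpa [selfWedgeFst, selfWedgeSnd, e2] using e1.symm
end

section
/- Let (X, x₀), (Y, y₀) and (Z, z₀) be pointed Hausdorff topological spaces. Give the wedge sum X ∨ Y (the quotient of the topological sum X ⊕ Y identifying the two basepoints, with the quotient topology, pointed at the identified basepoint) its two canonical inclusions ι_X : X → X ∨ Y and ι_Y : Y → X ∨ Y. Let C*(A, B) denote the set of basepoint-preserving continuous maps with the subspace compact-open topology inside C(A, B). Then the map C*(X ∨ Y, Z) → C*(X, Z) × C*(Y, Z) sending h to (h ∘ ι_X, h ∘ ι_Y) is a homeomorphism. -/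
open ContinuousMap

/-- The wedge sum of two pointed topological spaces `(X, x₀)` and `(Y, y₀)`: the quotient
of the topological sum `X ⊕ Y` identifying `inl x₀` with `inr y₀`, with the quotient
topology. -/
def Wedge (X Y : Type*) (x₀ : X) (y₀ : Y) : Type _ :=
  Quot (fun a b : X ⊕ Y => a = Sum.inl x₀ ∧ b = Sum.inr y₀)

instance (X Y : Type*) [TopologicalSpace X] [TopologicalSpace Y] (x₀ : X) (y₀ : Y) :
    TopologicalSpace (Wedge X Y x₀ y₀) :=
  inferInstanceAs (TopologicalSpace (Quot _))

section

variable {X Y : Type*} [TopologicalSpace X] [TopologicalSpace Y] (x₀ : X) (y₀ : Y)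

/-- The canonical inclusion `ι_X : X → X ∨ Y`. -/
def wedgeInl : C(X, Wedge X Y x₀ y₀) :=
  ⟨fun x => Quot.mk _ (Sum.inl x), continuous_quot_mk.comp continuous_inl⟩

/-- The canonical inclusion `ι_Y : Y → X ∨ Y`. -/
def wedgeInr : C(Y, Wedge X Y x₀ y₀) :=
  ⟨fun y => Quot.mk _ (Sum.inr y), continuous_quot_mk.comp continuous_inr⟩

end

variable {X Y Z : Type*} [TopologicalSpace X] [TopologicalSpace Y] [TopologicalSpace Z]

/-- The restriction map `C*(X ∨ Y, Z) → C*(X, Z) × C*(Y, Z)`, `h ↦ (h ∘ ι_X, h ∘ ι_Y)`,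
where `C*(A, B)` denotes the basepoint-preserving continuous maps with the subspace
compact-open topology. -/
def wedgeRestrict (x₀ : X) (y₀ : Y) (z₀ : Z)
    (h : {h : C(Wedge X Y x₀ y₀, Z) // h (Quot.mk _ (Sum.inl x₀)) = z₀}) :
    {f : C(X, Z) // f x₀ = z₀} × {g : C(Y, Z) // g y₀ = z₀} :=
  (⟨h.val.comp (wedgeInl x₀ y₀), h.property⟩,
   ⟨h.val.comp (wedgeInr x₀ y₀),
     (congrArg h.val (Quot.sound ⟨rfl, rfl⟩ :
        (Quot.mk _ (Sum.inl x₀) : Wedge X Y x₀ y₀) = Quot.mk _ (Sum.inr y₀))).symm.trans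
       h.property⟩)

/-
A pointed map out of `X ∨ Y` is the same as a pair of pointed maps agreeing at the basepoint,
so `wedgeRestrict` is a bijection and only the topology needs an argument. A subbasic set
`{h | h(K) ⊆ U}` of `C(X ∨ Y, Z)` is the preimage of
`{f | f(ι_X⁻¹ K) ⊆ U} × {g | g(ι_Y⁻¹ K) ⊆ U}`, because `X ∨ Y` is covered by the images of the
two inclusions. This set is open as soon as `ι_X⁻¹ K` and `ι_Y⁻¹ K` are compact, which holds
because `ι_X` and `ι_Y` are closed embeddings once points of `X` and `Y` are closed.
-/

open Set Topology

theorem Set.mapsTo_iff_of_union_range_eq_univ {α β γ δ : Type*} {f : α → γ} {g : β → γ}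
    (hcover : range f ∪ range g = univ) {h : γ → δ} {K : Set γ} {U : Set δ} :
    MapsTo h K U ↔ MapsTo (h ∘ f) (f ⁻¹' K) U ∧ MapsTo (h ∘ g) (g ⁻¹' K) U := by
  have hK : K = f '' (f ⁻¹' K) ∪ g '' (g ⁻¹' K) := by
    rw [image_preimage_eq_inter_range, image_preimage_eq_inter_range, ← inter_union_distrib_left,
      hcover, inter_univ]
  conv_lhs => rw [hK]
  rw [mapsTo_union, mapsTo_image_iff, mapsTo_image_iff]

section Restrict

variable {W : Type*} [TopologicalSpace W]

theorem ContinuousMap.isEmbedding_prodMk_comp_of_union_range_eq_univ (f : C(X, W)) (g : C(Y, W))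
    (hcover : range f ∪ range g = univ)
    (hf : ∀ K, IsCompact K → IsCompact (f ⁻¹' K)) (hg : ∀ K, IsCompact K → IsCompact (g ⁻¹' K)) :
    IsEmbedding (fun h : C(W, Z) => (h.comp f, h.comp g)) := by
  have hcont : Continuous (fun h : C(W, Z) => (h.comp f, h.comp g)) :=
    (continuous_precomp f).prodMk (continuous_precomp g)
  refine ⟨⟨le_antisymm (continuous_iff_le_induced.mp hcont) ?_⟩, fun h₁ h₂ heq => ?_⟩
  · refine TopologicalSpace.le_generateFrom_iff_subset_isOpen.mpr ?_
    rintro _ ⟨K, hK, U, hU, rfl⟩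
    refine isOpen_induced_iff.mpr ⟨{p | MapsTo p.1 (f ⁻¹' K) U} ∩ {p | MapsTo p.2 (g ⁻¹' K) U},
      ((isOpen_setOfPred_mapsTo (hf K hK) hU).preimage continuous_fst).inter
        ((isOpen_setOfPred_mapsTo (hg K hK) hU).preimage continuous_snd), ?_⟩
    ext h
    exact (mapsTo_iff_of_union_range_eq_univ hcover).symm
  · obtain ⟨hf₁, hg₁⟩ := Prod.ext_iff.mp heq
    ext w
    rcases (hcover ▸ mem_univ w : w ∈ range f ∪ range g) with ⟨x, rfl⟩ | ⟨y, rfl⟩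
    · exact DFunLike.congr_fun hf₁ x
    · exact DFunLike.congr_fun hg₁ y

end Restrict

section Wedge

variable (x₀ : X) (y₀ : Y)

theorem wedgeInl_eq_wedgeInr : wedgeInl x₀ y₀ x₀ = wedgeInr x₀ y₀ y₀ :=
  Quot.sound ⟨rfl, rfl⟩

theorem range_wedgeInl_union_range_wedgeInr :
    range (wedgeInl x₀ y₀) ∪ range (wedgeInr x₀ y₀) = univ := by
  refine eq_univ_of_forall fun w => ?_
  rcases w with ⟨x | y⟩
  · exact Or.inl ⟨x, rfl⟩
  · exact Or.inr ⟨y, rfl⟩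

def wedgeLift (f : C(X, Z)) (g : C(Y, Z)) (hfg : f x₀ = g y₀) : C(Wedge X Y x₀ y₀, Z) :=
  ⟨Quot.lift (Sum.elim f g) (by rintro _ _ ⟨rfl, rfl⟩; exact hfg),
    continuous_quot_lift _ (f.continuous.sumElim g.continuous)⟩

theorem range_wedgeInl :
    range (wedgeInl x₀ y₀) = wedgeLift x₀ y₀ (.const X y₀) (.id Y) rfl ⁻¹' {y₀} := by
  ext w
  rcases w with ⟨x | y⟩
  · exact ⟨fun _ => rfl, fun _ => ⟨x, rfl⟩⟩
  · refine ⟨?_, fun (hy : y = y₀) => ⟨x₀, hy ▸ wedgeInl_eq_wedgeInr x₀ y₀⟩⟩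
    rintro ⟨x, hx⟩
    exact (congrArg (wedgeLift x₀ y₀ (.const X y₀) (.id Y) rfl) hx).symm

theorem range_wedgeInr :
    range (wedgeInr x₀ y₀) = wedgeLift x₀ y₀ (.id X) (.const Y x₀) rfl ⁻¹' {x₀} := by
  ext w
  rcases w with ⟨x | y⟩
  · refine ⟨?_, fun (hx : x = x₀) => ⟨y₀, hx ▸ (wedgeInl_eq_wedgeInr x₀ y₀).symm⟩⟩
    rintro ⟨y, hy⟩
    exact (congrArg (wedgeLift x₀ y₀ (.id X) (.const Y x₀) rfl) hy).symm
  · exact ⟨fun _ => rfl, fun _ => ⟨y, rfl⟩⟩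

theorem isClosedEmbedding_wedgeInl [T1Space Y] : IsClosedEmbedding (wedgeInl x₀ y₀) :=
  ⟨Function.LeftInverse.isEmbedding (f := wedgeLift x₀ y₀ (.id X) (.const Y x₀) rfl)
      (fun _ => rfl) (map_continuous _) (map_continuous _),
    range_wedgeInl x₀ y₀ ▸ isClosed_singleton.preimage (map_continuous _)⟩

theorem isClosedEmbedding_wedgeInr [T1Space X] : IsClosedEmbedding (wedgeInr x₀ y₀) :=
  ⟨Function.LeftInverse.isEmbedding (f := wedgeLift x₀ y₀ (.const X y₀) (.id Y) rfl)
      (fun _ => rfl) (map_continuous _) (map_continuous _),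
    range_wedgeInr x₀ y₀ ▸ isClosed_singleton.preimage (map_continuous _)⟩

theorem wedgeRestrict_surjective (z₀ : Z) : Function.Surjective (wedgeRestrict x₀ y₀ z₀) :=
  fun ⟨⟨f, hf⟩, ⟨g, hg⟩⟩ => ⟨⟨wedgeLift x₀ y₀ f g (hf.trans hg.symm), hf⟩, rfl⟩

theorem isEmbedding_wedgeRestrict [T1Space X] [T1Space Y] (z₀ : Z) :
    IsEmbedding (wedgeRestrict x₀ y₀ z₀) := by
  have hpair : IsEmbedding fun h : C(Wedge X Y x₀ y₀, Z) =>
      (h.comp (wedgeInl x₀ y₀), h.comp (wedgeInr x₀ y₀)) :=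
    ContinuousMap.isEmbedding_prodMk_comp_of_union_range_eq_univ _ _
      (range_wedgeInl_union_range_wedgeInr x₀ y₀)
      (fun _ => (isClosedEmbedding_wedgeInl x₀ y₀).isCompact_preimage)
      (fun _ => (isClosedEmbedding_wedgeInr x₀ y₀).isCompact_preimage)
  have hval : IsEmbedding (Prod.map (Subtype.val : {f : C(X, Z) // f x₀ = z₀} → C(X, Z))
      (Subtype.val : {g : C(Y, Z) // g y₀ = z₀} → C(Y, Z))) :=
    IsEmbedding.subtypeVal.prodMap IsEmbedding.subtypeVal
  exact (hval.of_comp_iff).mp (hpair.comp IsEmbedding.subtypeVal)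

end Wedge

theorem isHomeomorph_wedgeRestrict_general [T2Space X] [T2Space Y]
    (x₀ : X) (y₀ : Y) (z₀ : Z) :
    IsHomeomorph (wedgeRestrict x₀ y₀ z₀) :=
  isHomeomorph_iff_isEmbedding_surjective.mpr
    ⟨isEmbedding_wedgeRestrict x₀ y₀ z₀, wedgeRestrict_surjective x₀ y₀ z₀⟩

/-- For pointed Hausdorff spaces `(X, x₀)`, `(Y, y₀)`, `(Z, z₀)`, the map
`C*(X ∨ Y, Z) → C*(X, Z) × C*(Y, Z)` sending `h` to `(h ∘ ι_X, h ∘ ι_Y)` is a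
homeomorphism (all mapping spaces carry the (subspace) compact-open topology). -/
theorem isHomeomorph_wedgeRestrict [T2Space X] [T2Space Y] [T2Space Z]
    (x₀ : X) (y₀ : Y) (z₀ : Z) :
    IsHomeomorph (wedgeRestrict x₀ y₀ z₀) :=
  isHomeomorph_wedgeRestrict_general x₀ y₀ z₀
end
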